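/- arXiv:1404.6600 — 4 statements merged into one kernel-verified Lean document; each statement's English description precedes it below -/
import Mathlib

section
/- Let P(z) = a_0 + Σ_{j=μ}^{n} a_j z^j, 1 ≤ μ ≤ n, be a polynomial of degree n having no zero in |z| ≤ k, where k ≥ 1, and set m = min_{|z|=k} |P(z)|. Then s_0 ≥ k^μ, where s_0 = k^{μ+1} · ( (μ/n)·(|a_μ|/(|a_0| − m))·k^{μ−1} + 1 ) / ( (μ/n)·(|a_μ|/(|a_0| − m))·k^{μ+1} + 1 ). -/
/-!
The roots `w` of the reversed polynomial `X^n P(1/X)` are the reciprocals of the roots of `P`,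
so `‖w‖ ≤ 1/k`, and Vieta's formulas read `a_j = a₀ (-1)^j e_j(w)`. As `a_1 = ⋯ = a_{μ-1} = 0`,
Newton's identities make `μ e_μ(w)` equal to `±∑ w^μ`, which gives Qazi's inequality
`μ ‖a_μ‖ k^μ ≤ n ‖a₀‖`. Applied to `P - c` with `c` a multiple of `a₀` of modulus `< m` (which
has no zero in the disk by the minimum modulus principle) and letting `‖c‖ → m`, it yields
`μ ‖a_μ‖ k^μ ≤ n (‖a₀‖ - m)`, i.e. `A k^μ ≤ 1` for `A = (μ/n)(‖a_μ‖/(‖a₀‖ - m))`. Finally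
`k^{μ+1} (A k^{μ-1} + 1) - k^μ (A k^{μ+1} + 1) = (k - 1) k^μ (1 - A k^μ) ≥ 0`.
-/

open Polynomial Metric

namespace Multiset

theorem psum_eq_neg_one_pow_mul_esymm {R : Type*} [CommRing R] (s : Multiset R) {μ : ℕ}
    (hμ : 0 < μ) (he : ∀ j, 0 < j → j < μ → s.esymm j = 0) :
    (s.map (· ^ μ)).sum = (-1) ^ (μ + 1) * μ * s.esymm μ := by
  classical
  have hes : ∀ j, MvPolynomial.aeval (fun x : s ↦ (x : R)) (MvPolynomial.esymm s R j)
      = s.esymm j := by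
    intro j
    rw [MvPolynomial.aeval_esymm_eq_multiset_esymm, map_univ_coe]
  have hps : ∀ j, MvPolynomial.aeval (fun x : s ↦ (x : R)) (MvPolynomial.psum s R j)
      = (s.map (· ^ j)).sum := by
    intro j
    simp only [MvPolynomial.psum, map_sum, map_pow, MvPolynomial.aeval_X]
    rw [Finset.sum_eq_multiset_sum, ← map_univ_comp_coe s (· ^ j)]
    rfl
  have newton := congrArg (MvPolynomial.aeval (fun x : s ↦ (x : R)))
    (MvPolynomial.psum_eq_mul_esymm_sub_sum s R μ hμ)
  rw [hps] at newton
  rw [newton, map_sub, map_sum, Finset.sum_eq_zero, sub_zero]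
  · simp only [map_mul, hes, map_pow, map_neg, map_one, map_natCast]
  · rintro ⟨i, j⟩ hij
    simp only [Finset.mem_filter, Set.mem_Ioo] at hij
    rw [map_mul, map_mul, hes, he i hij.2.1 hij.2.2, mul_zero, zero_mul]

theorem natCast_mul_norm_esymm_le {𝕜 : Type*} [RCLike 𝕜] (s : Multiset 𝕜) {μ : ℕ} {B : ℝ}
    (hμ : 0 < μ) (he : ∀ j, 0 < j → j < μ → s.esymm j = 0) (hB : ∀ z ∈ s, ‖z‖ ≤ B) :
    μ * ‖s.esymm μ‖ ≤ card s * B ^ μ := by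
  calc (μ : ℝ) * ‖s.esymm μ‖ = ‖(s.map (· ^ μ)).sum‖ := by
        simp [psum_eq_neg_one_pow_mul_esymm s hμ he]
    _ ≤ ((s.map (· ^ μ)).map norm).sum := norm_multiset_sum_le _
    _ ≤ card s • B ^ μ := by
        rw [map_map, ← card_map (norm ∘ (· ^ μ)) s]
        refine sum_le_card_nsmul _ _ ?_
        simp only [mem_map, Function.comp_apply, norm_pow]
        rintro _ ⟨z, hz, rfl⟩
        exact pow_le_pow_left₀ (norm_nonneg z) (hB z hz) μ
    _ = card s * B ^ μ := nsmul_eq_mul _ _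

end Multiset

namespace Polynomial

theorem natDegree_reverse_of_coeff_zero_ne_zero {R : Type*} [Semiring R] {p : R[X]}
    (h0 : p.coeff 0 ≠ 0) : p.reverse.natDegree = p.natDegree := by
  rw [reverse_natDegree, natTrailingDegree_eq_zero.mpr (Or.inr h0), Nat.sub_zero]

variable {F : Type*} [Field F] {Q : F[X]}

theorem coeff_eq_coeff_zero_mul_esymm_roots_reverse [IsAlgClosed F] (h0 : Q.coeff 0 ≠ 0) (r : ℕ) :
    Q.coeff r = Q.coeff 0 * (-1) ^ r * Q.reverse.roots.esymm r := by
  have hdeg := natDegree_reverse_of_coeff_zero_ne_zero h0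
  by_cases hr : r ≤ Q.natDegree
  · have hlead : Q.reverse.leadingCoeff = Q.coeff 0 := by
      rw [reverse_leadingCoeff, trailingCoeff, natTrailingDegree_eq_zero.mpr (Or.inr h0)]
    have vieta := coeff_eq_esymm_roots_of_splits (IsAlgClosed.splits Q.reverse)
      (k := Q.natDegree - r) (by omega)
    rwa [coeff_reverse, revAt_le (by omega), Nat.sub_sub_self hr, hlead, hdeg,
      Nat.sub_sub_self hr] at vieta
  · have hcard : Multiset.card Q.reverse.roots < r := by
      rw [splits_iff_card_roots.mp (IsAlgClosed.splits _), hdeg]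
      omega
    rw [coeff_eq_zero_of_natDegree_lt (by omega), Multiset.esymm,
      Multiset.powersetCard_eq_empty r hcard, Multiset.map_zero, Multiset.sum_zero, mul_zero]

theorem isRoot_inv_of_mem_roots_reverse {w : F} (hw : w ∈ Q.reverse.roots) :
    Q.IsRoot w⁻¹ := by
  have hQ : Q ≠ 0 := reverse_eq_zero.not.mp (ne_zero_of_mem_roots hw)
  have hw0 : w ≠ 0 := by
    rintro rfl
    have := (mem_roots'.mp hw).2
    rw [IsRoot, ← coeff_zero_eq_eval_zero, coeff_zero_reverse] at this
    exact leadingCoeff_ne_zero.mpr hQ this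
  let := invertibleOfNonzero (inv_ne_zero hw0)
  have := (eval₂_reverse_eq_zero_iff (RingHom.id F) w⁻¹ Q).mp
  rw [invOf_eq_inv, inv_inv] at this
  exact this (mem_roots'.mp hw).2

end Polynomial

theorem Complex.le_norm_of_forall_mem_sphere_le_norm {f : ℂ → ℂ} {a : ℂ} {r c : ℝ} (hr : 0 < r)
    (hf : DifferentiableOn ℂ f (closedBall a r)) (hf0 : ∀ z ∈ closedBall a r, f z ≠ 0)
    (hc : ∀ z ∈ sphere a r, c ≤ ‖f z‖) {z : ℂ} (hz : z ∈ closedBall a r) : c ≤ ‖f z‖ := by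
  rcases le_or_gt c 0 with hc0 | hc0
  · exact hc0.trans (norm_nonneg _)
  have hcl : closure (ball a r) = closedBall a r := closure_ball a hr.ne'
  have hinv : DiffContOnCl ℂ (fun w ↦ (f w)⁻¹) (ball a r) :=
    (hf.inv hf0).diffContOnCl_ball subset_rfl
  have hfront : ∀ w ∈ frontier (ball a r), ‖(f w)⁻¹‖ ≤ c⁻¹ := by
    intro w hw
    rw [frontier_ball a hr.ne'] at hw
    rw [norm_inv]
    exact inv_anti₀ hc0 (hc w hw)
  have := Complex.norm_le_of_forall_mem_frontier_norm_le isBounded_ball hinv hfront (hcl ▸ hz)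
  rwa [norm_inv, inv_le_inv₀ (norm_pos_iff.mpr (hf0 z hz)) hc0] at this

theorem Complex.sInf_norm_sphere_pos_and_le {f : ℂ → ℂ} {a : ℂ} {r : ℝ} (hr : 0 < r)
    (hf : DifferentiableOn ℂ f (closedBall a r)) (hf0 : ∀ z ∈ closedBall a r, f z ≠ 0) :
    0 < sInf ((fun z ↦ ‖f z‖) '' sphere a r) ∧
      ∀ z ∈ closedBall a r, sInf ((fun z ↦ ‖f z‖) '' sphere a r) ≤ ‖f z‖ := by
  have hcont : ContinuousOn (fun z ↦ ‖f z‖) (sphere a r) :=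
    (hf.continuousOn.mono sphere_subset_closedBall).norm
  obtain ⟨z₀, hz₀, hmin⟩ := ((isCompact_sphere a r).image_of_continuousOn hcont).sInf_mem
    ((NormedSpace.sphere_nonempty.mpr hr.le).image _)
  have hbdd : BddBelow ((fun z ↦ ‖f z‖) '' sphere a r) := ⟨0, by simp [lowerBounds]⟩
  refine ⟨hmin ▸ norm_pos_iff.mpr (hf0 z₀ (sphere_subset_closedBall hz₀)), fun z hz ↦ ?_⟩
  exact Complex.le_norm_of_forall_mem_sphere_le_norm hr hf hf0
    (fun w hw ↦ csInf_le hbdd ⟨w, hw, rfl⟩) hz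

namespace Polynomial

variable {P : ℂ[X]} {μ : ℕ} {k : ℝ}

theorem natCast_mul_norm_coeff_mul_pow_le (hμ : 0 < μ) (hk : 0 < k)
    (hcoeff : ∀ j, 0 < j → j < μ → P.coeff j = 0) (hz : ∀ z : ℂ, ‖z‖ < k → P.eval z ≠ 0) :
    μ * ‖P.coeff μ‖ * k ^ μ ≤ P.natDegree * ‖P.coeff 0‖ := by
  have h0 : P.coeff 0 ≠ 0 := by
    simpa [coeff_zero_eq_eval_zero] using hz 0 (by simpa using hk)
  have vieta := coeff_eq_coeff_zero_mul_esymm_roots_reverse h0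
  have he : ∀ j, 0 < j → j < μ → P.reverse.roots.esymm j = 0 := by
    intro j hj hjμ
    simpa [hcoeff j hj hjμ, h0] using (vieta j).symm
  have hroots : ∀ w ∈ P.reverse.roots, ‖w‖ ≤ k⁻¹ := by
    intro w hw
    rw [← inv_inv w, norm_inv]
    exact inv_anti₀ hk (not_lt.mp fun h ↦ hz _ h (isRoot_inv_of_mem_roots_reverse hw))
  have hcard : Multiset.card P.reverse.roots = P.natDegree := by
    rw [splits_iff_card_roots.mp (IsAlgClosed.splits _),
      natDegree_reverse_of_coeff_zero_ne_zero h0]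
  have newton := Multiset.natCast_mul_norm_esymm_le _ hμ he hroots
  rw [hcard] at newton
  calc (μ : ℝ) * ‖P.coeff μ‖ * k ^ μ
      = μ * ‖P.reverse.roots.esymm μ‖ * (‖P.coeff 0‖ * k ^ μ) := by
        rw [vieta μ]
        simp only [norm_mul, norm_pow, norm_neg, norm_one, one_pow, mul_one]
        ring
    _ ≤ P.natDegree * k⁻¹ ^ μ * (‖P.coeff 0‖ * k ^ μ) := by gcongr
    _ = P.natDegree * ‖P.coeff 0‖ := by
        rw [inv_pow]
        field_simp [pow_ne_zero μ hk.ne']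

theorem natCast_mul_norm_coeff_mul_pow_le_sub_of_lt {c : ℝ} (hμ : 0 < μ) (hk : 0 < k)
    (hcoeff : ∀ j, 0 < j → j < μ → P.coeff j = 0) (hc0 : 0 ≤ c)
    (hc : ∀ z : ℂ, ‖z‖ < k → c < ‖P.eval z‖) :
    μ * ‖P.coeff μ‖ * k ^ μ ≤ P.natDegree * (‖P.coeff 0‖ - c) := by
  have hca₀ : c < ‖P.coeff 0‖ := by
    simpa [coeff_zero_eq_eval_zero] using hc 0 (by simpa using hk)
  set u : ℂ := P.coeff 0 / (‖P.coeff 0‖ : ℂ)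
  have hu : ‖u‖ = 1 := by
    simp [u, (hc0.trans_lt hca₀).ne']
  have ha₀ : P.coeff 0 = (‖P.coeff 0‖ : ℂ) * u := by
    simp [u, mul_div_cancel₀, (hc0.trans_lt hca₀).ne']
  clear_value u
  set Q : ℂ[X] := P - C ((c : ℂ) * u)
  have hQ : ∀ j, 0 < j → Q.coeff j = P.coeff j := fun j hj ↦ by
    simp [Q, coeff_C, hj.ne']
  have hQ0 : ‖Q.coeff 0‖ = ‖P.coeff 0‖ - c := by
    have : Q.coeff 0 = ((‖P.coeff 0‖ - c : ℝ) : ℂ) * u := by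
      simp only [Q, coeff_sub, coeff_C_zero]
      push_cast
      linear_combination ha₀
    rw [this, norm_mul, hu, mul_one, Complex.norm_real, Real.norm_of_nonneg (by linarith)]
  have hQz : ∀ z : ℂ, ‖z‖ < k → Q.eval z ≠ 0 := by
    intro z hz hQz
    have hPz : P.eval z = c * u := by simpa [Q, sub_eq_zero] using hQz
    have := hc z hz
    rw [hPz, norm_mul, hu, mul_one, Complex.norm_real, Real.norm_of_nonneg hc0] at this
    exact lt_irrefl c this
  have := natCast_mul_norm_coeff_mul_pow_le hμ hk
    (fun j hj hjμ ↦ (hQ j hj).trans (hcoeff j hj hjμ)) hQz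
  rwa [hQ μ hμ, hQ0, natDegree_sub_C] at this

theorem natCast_mul_norm_coeff_mul_pow_le_sub {m : ℝ} (hμ : 0 < μ) (hk : 0 < k)
    (hcoeff : ∀ j, 0 < j → j < μ → P.coeff j = 0) (hm0 : 0 < m)
    (hm : ∀ z : ℂ, ‖z‖ < k → m ≤ ‖P.eval z‖) :
    μ * ‖P.coeff μ‖ * k ^ μ ≤ P.natDegree * (‖P.coeff 0‖ - m) := by
  have hclosed : IsClosed {c : ℝ | μ * ‖P.coeff μ‖ * k ^ μ ≤ P.natDegree * (‖P.coeff 0‖ - c)} :=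
    isClosed_le continuous_const (by fun_prop)
  have hIco : Set.Ico 0 m ⊆ {c : ℝ | μ * ‖P.coeff μ‖ * k ^ μ ≤ P.natDegree * (‖P.coeff 0‖ - c)} :=
    fun c ⟨hc0, hcm⟩ ↦ natCast_mul_norm_coeff_mul_pow_le_sub_of_lt hμ hk hcoeff hc0
      fun z hz ↦ hcm.trans_le (hm z hz)
  exact hclosed.closure_subset_iff.mpr hIco (closure_Ico hm0.ne ▸ ⟨hm0.le, le_rfl⟩)

end Polynomial

theorem pow_le_pow_succ_mul_div {k A : ℝ} {μ : ℕ} (hk : 1 ≤ k) (hμ : 1 ≤ μ) (hA : 0 ≤ A)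
    (hAk : A * k ^ μ ≤ 1) :
    k ^ μ ≤ k ^ (μ + 1) * (A * k ^ (μ - 1) + 1) / (A * k ^ (μ + 1) + 1) := by
  obtain ⟨ν, rfl⟩ : ∃ ν, μ = ν + 1 := ⟨μ - 1, by omega⟩
  rw [le_div_iff₀ (by positivity), Nat.add_sub_cancel]
  have hkν : 0 ≤ k ^ (ν + 1) := by positivity
  linear_combination mul_nonneg (mul_nonneg (sub_nonneg.mpr hk) hkν) (sub_nonneg.mpr hAk)

theorem ggw_bound_general
    (n μ : ℕ) (P : Polynomial ℂ) (k : ℝ)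
    (hμ1 : 1 ≤ μ)
    (hdeg : P.natDegree = n)
    (hcoeff : ∀ j, 1 ≤ j → j < μ → P.coeff j = 0)
    (hk : 1 ≤ k)
    (hzeros : ∀ z : ℂ, ‖z‖ ≤ k → P.eval z ≠ 0)
    (m s₀ : ℝ)
    (hm : m = sInf ((fun z => ‖P.eval z‖) '' sphere (0 : ℂ) k))
    (hs₀ : s₀ = k ^ (μ + 1) *
        (((μ : ℝ) / (n : ℝ)) * (‖P.coeff μ‖ / (‖P.coeff 0‖ - m))
            * k ^ (μ - 1) + 1)
      / (((μ : ℝ) / (n : ℝ)) * (‖P.coeff μ‖ / (‖P.coeff 0‖ - m))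
            * k ^ (μ + 1) + 1)) :
    s₀ ≥ k ^ μ := by
  have hk0 : 0 < k := by linarith
  obtain ⟨hm0, hmle⟩ := Complex.sInf_norm_sphere_pos_and_le hk0 P.differentiable.differentiableOn
    fun z hz ↦ hzeros z (mem_closedBall_zero_iff.mp hz)
  rw [← hm] at hm0 hmle
  have hma₀ : m ≤ ‖P.coeff 0‖ := by
    simpa [coeff_zero_eq_eval_zero] using hmle 0 (by simpa using hk0.le)
  have key : μ * ‖P.coeff μ‖ * k ^ μ ≤ n * (‖P.coeff 0‖ - m) :=
    hdeg ▸ natCast_mul_norm_coeff_mul_pow_le_sub hμ1 hk0 hcoeff hm0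
      fun z hz ↦ hmle z (mem_closedBall_zero_iff.mpr hz.le)
  rw [hs₀, ge_iff_le]
  refine pow_le_pow_succ_mul_div hk hμ1 (by have := sub_nonneg.mpr hma₀; positivity) ?_
  rw [div_mul_div_comm, div_mul_eq_mul_div]
  exact div_le_one_of_le₀ key (by have := sub_nonneg.mpr hma₀; positivity)

/-- **Lemma (Gardner–Govil–Weems).** If `P(z) = a₀ + Σ_{j=μ}^n a_j z^j`, `1 ≤ μ ≤ n`,
has degree `n` and no zero in `|z| ≤ k` with `k ≥ 1`, and `m = min_{|z|=k} |P(z)|`,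
then `s₀ ≥ k^μ` where
`s₀ = k^{μ+1} ((μ/n)(|a_μ|/(|a₀|-m)) k^{μ-1} + 1) / ((μ/n)(|a_μ|/(|a₀|-m)) k^{μ+1} + 1)`. -/
theorem ggw_bound
    (n μ : ℕ) (P : Polynomial ℂ) (k : ℝ)
    (hμ1 : 1 ≤ μ) (hμn : μ ≤ n)
    (hdeg : P.natDegree = n)
    (hcoeff : ∀ j, 1 ≤ j → j < μ → P.coeff j = 0)
    (hk : 1 ≤ k)
    (hzeros : ∀ z : ℂ, ‖z‖ ≤ k → P.eval z ≠ 0)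
    (m s₀ : ℝ)
    (hm : m = sInf ((fun z => ‖P.eval z‖) '' sphere (0 : ℂ) k))
    (hs₀ : s₀ = k ^ (μ + 1) *
        (((μ : ℝ) / (n : ℝ)) * (‖P.coeff μ‖ / (‖P.coeff 0‖ - m))
            * k ^ (μ - 1) + 1)
      / (((μ : ℝ) / (n : ℝ)) * (‖P.coeff μ‖ / (‖P.coeff 0‖ - m))
            * k ^ (μ + 1) + 1)) :
    s₀ ≥ k ^ μ :=
  ggw_bound_general n μ P k hμ1 hdeg hcoeff hk hzeros m s₀ hm hs₀
end

section
/- Let P(z) = a_n z^n + Σ_{j=μ}^{n} a_{n−j} z^{n−j}, 1 ≤ μ ≤ n, be a polynomial of degree n having all its zeros in |z| ≤ k, where k ≤ 1. Then for all z with |z| = 1, |P′(z)| ≥ (n/(1 + k^μ)) |P(z)|. -/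
/-!
Put `D = n P - z P'`. The vanishing coefficients of `P` make `deg D ≤ n - μ`, while
`deg P' = n - 1`. At a point `y` no smaller in modulus than every root `w`, each root contributes
a term of real part at least `1/2` to `y P'(y) / P(y) = Σ y / (y - w)`, whence
`|D(y)| ≤ |y P'(y)|`. If the roots lie in `|w| < κ`, then `P'` has no zeros in `|y| ≥ κ`
(Gauss–Lucas), so the maximum modulus principle applies to `D / P'` on the exterior of that disk,
where it decays like `y^{1-μ}`: from `|D| ≤ κ |P'|` on `|y| = κ` we get `|D(z)| ≤ κ^μ |P'(z)|`
on `|z| = 1`. Letting `κ ↓ k` and using `n |P| ≤ |D| + |z P'|` gives the claim.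
-/

open Polynomial

theorem Complex.half_le_re_div_sub {y w : ℂ} (hw : ‖w‖ ≤ ‖y‖) (hne : y ≠ w) :
    1 / 2 ≤ (y / (y - w)).re := by
  have hpos : 0 < Complex.normSq (y - w) := Complex.normSq_pos.2 (sub_ne_zero.2 hne)
  have hsq : Complex.normSq w ≤ Complex.normSq y := by
    simpa only [← Complex.sq_norm] using pow_le_pow_left₀ (norm_nonneg w) hw 2
  rw [Complex.div_re, ← add_div, le_div_iff₀ hpos]
  simp only [Complex.normSq_apply, Complex.sub_re, Complex.sub_im] at hsq ⊢
  nlinarith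

theorem Complex.norm_ofReal_sub_le_norm {r : ℝ} {S : ℂ} (hr : 0 ≤ r) (h : r ≤ 2 * S.re) :
    ‖(r : ℂ) - S‖ ≤ ‖S‖ := by
  rw [← sq_le_sq₀ (norm_nonneg _) (norm_nonneg _), Complex.sq_norm, Complex.sq_norm]
  simp only [Complex.normSq_apply, Complex.sub_re, Complex.sub_im, Complex.ofReal_re,
    Complex.ofReal_im]
  nlinarith

theorem Polynomial.norm_natDegree_mul_eval_sub_le (Q : ℂ[X]) {y : ℂ}
    (h : ∀ w ∈ Q.roots, ‖w‖ ≤ ‖y‖) :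
    ‖(Q.natDegree : ℂ) * Q.eval y - y * Q.derivative.eval y‖ ≤ ‖y * Q.derivative.eval y‖ := by
  by_cases hQy : Q.eval y = 0
  · simp [hQy]
  set S := (Q.roots.map fun w => y / (y - w)).sum
  have hderiv : y * Q.derivative.eval y = Q.eval y * S := by
    rw [(IsAlgClosed.splits Q).eval_derivative_eq_eval_mul_sum hQy, mul_left_comm,
      ← Multiset.sum_map_mul_left]
    simp only [S, mul_one_div]
  have hre : (Q.natDegree : ℝ) ≤ 2 * S.re := by
    have hterm : ∀ x ∈ Q.roots.map (fun w => (y / (y - w)).re), 1 / 2 ≤ x := by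
      simp only [Multiset.mem_map]
      rintro _ ⟨w, hw, rfl⟩
      refine Complex.half_le_re_div_sub (h w hw) ?_
      rintro rfl
      exact hQy (isRoot_of_mem_roots hw)
    have := Multiset.card_nsmul_le_sum hterm
    rw [Multiset.card_map, IsAlgClosed.card_roots_eq_natDegree, nsmul_eq_mul] at this
    have hS : S.re = (Q.roots.map fun w => (y / (y - w)).re).sum := by
      simp only [S, ← Complex.reLm_coe, map_multiset_sum, Multiset.map_map, Function.comp_def]
    linarith
  rw [hderiv, show (Q.natDegree : ℂ) * Q.eval y - Q.eval y * S
      = Q.eval y * (((Q.natDegree : ℝ) : ℂ) - S) by push_cast; ring, norm_mul, norm_mul]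
  gcongr
  exact Complex.norm_ofReal_sub_le_norm (Nat.cast_nonneg _) hre

theorem Polynomial.coeff_C_mul_sub_X_mul_derivative {R : Type*} [CommRing R] (P : R[X]) (n m : ℕ) :
    (C (n : R) * P - X * derivative P).coeff m = ((n : R) - m) * P.coeff m := by
  cases m with
  | zero => simp
  | succ m => rw [coeff_sub, coeff_C_mul, coeff_X_mul, coeff_derivative]; push_cast; ring

theorem Polynomial.natDegree_C_mul_sub_X_mul_derivative_le {R : Type*} [CommRing R] {P : R[X]}
    {n μ : ℕ} (hdeg : P.natDegree = n) (hgap : ∀ j, 1 ≤ j → j < μ → P.coeff (n - j) = 0) :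
    (C (n : R) * P - X * derivative P).natDegree ≤ n - μ := by
  refine natDegree_le_iff_coeff_eq_zero.2 fun m hm => ?_
  rw [coeff_C_mul_sub_X_mul_derivative]
  rcases lt_trichotomy m n with h | rfl | h
  · have := hgap (n - m) (by omega) (by omega)
    rw [Nat.sub_sub_self h.le] at this
    rw [this, mul_zero]
  · rw [sub_self, zero_mul]
  · rw [coeff_eq_zero_of_natDegree_lt (hdeg ▸ h), mul_zero]

theorem Polynomial.eval_reflect {K : Type*} [Field K] {p : K[X]} {N : ℕ} (hp : p.natDegree ≤ N)
    {w : K} (hw : w ≠ 0) : (reflect N p).eval w = p.eval w⁻¹ * w ^ N := by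
  let : Invertible w⁻¹ := invertibleOfNonzero (inv_ne_zero hw)
  have h := eval₂_reflect_mul_pow (RingHom.id K) w⁻¹ N p hp
  rw [invOf_eq_inv, inv_inv] at h
  rw [← eval, ← eval] at h
  rw [← h, mul_assoc, ← mul_pow, inv_mul_cancel₀ hw, one_pow, mul_one]

/-- Maximum modulus for `A / B` on the exterior `r ≤ ‖y‖`: it is applied to the quotient of the
reflected polynomials on the disk of radius `r⁻¹`, which is holomorphic there. -/
theorem Polynomial.norm_eval_mul_pow_le_of_forall_norm_eq {A B : ℂ[X]} {a : ℕ} {r c : ℝ}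
    (hr : 0 < r) (hA : A.natDegree ≤ a) (haB : a ≤ B.natDegree)
    (hB : ∀ y : ℂ, r ≤ ‖y‖ → B.eval y ≠ 0)
    (hsphere : ∀ y : ℂ, ‖y‖ = r → ‖A.eval y‖ ≤ c * ‖B.eval y‖) {y : ℂ} (hy : r ≤ ‖y‖) :
    ‖A.eval y‖ * ‖y‖ ^ (B.natDegree - a) ≤ c * r ^ (B.natDegree - a) * ‖B.eval y‖ := by
  obtain ⟨d, hd⟩ : ∃ d, B.natDegree = a + d := ⟨B.natDegree - a, by omega⟩
  rw [hd, Nat.add_sub_cancel_left]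
  set f : ℂ → ℂ := fun w => (reflect a A).eval w / (reflect B.natDegree B).eval w
  have hf : ∀ u : ℂ, u ≠ 0 → ‖f u⁻¹‖ = ‖A.eval u‖ * ‖u‖ ^ d / ‖B.eval u‖ := by
    intro u hu
    have hu' : 0 < ‖u‖ := norm_pos_iff.2 hu
    simp only [f]
    rw [eval_reflect hA (inv_ne_zero hu), eval_reflect le_rfl (inv_ne_zero hu), inv_inv, hd]
    simp only [norm_div, norm_mul, norm_pow, norm_inv, inv_pow, pow_add]
    field_simp
  have hden : ∀ w ∈ Metric.closedBall (0 : ℂ) r⁻¹, (reflect B.natDegree B).eval w ≠ 0 := by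
    intro w hw
    rcases eq_or_ne w 0 with rfl | hw0
    · have hB0 : B ≠ 0 := by
        rintro rfl
        exact hB r (by simp [abs_of_pos hr]) eval_zero
      rw [← coeff_zero_eq_eval_zero, coeff_reflect, revAt_zero]
      exact leadingCoeff_ne_zero.2 hB0
    · rw [eval_reflect le_rfl hw0]
      refine mul_ne_zero (hB _ ?_) (pow_ne_zero _ hw0)
      rw [mem_closedBall_zero_iff] at hw
      rw [norm_inv]
      exact (le_inv_comm₀ hr (norm_pos_iff.2 hw0)).2 hw
  have hdiff : DiffContOnCl ℂ f (Metric.ball 0 r⁻¹) := by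
    refine DifferentiableOn.diffContOnCl ?_
    rw [closure_ball _ (inv_ne_zero hr.ne')]
    exact (reflect a A).differentiable.differentiableOn.div
      (reflect B.natDegree B).differentiable.differentiableOn hden
  have hfront : ∀ w ∈ frontier (Metric.ball (0 : ℂ) r⁻¹), ‖f w‖ ≤ c * r ^ d := by
    intro w hw
    rw [frontier_ball _ (inv_ne_zero hr.ne'), mem_sphere_zero_iff_norm] at hw
    have hw0 : w ≠ 0 := by rintro rfl; simp at hw; exact hr.ne hw
    have hwinv : ‖w⁻¹‖ = r := by rw [norm_inv, hw, inv_inv]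
    have hBw : 0 < ‖B.eval w⁻¹‖ := norm_pos_iff.2 (hB _ hwinv.ge)
    rw [← inv_inv w, hf _ (inv_ne_zero hw0), hwinv, div_le_iff₀ hBw]
    have := hsphere _ hwinv
    have hrd : 0 ≤ r ^ d := by positivity
    nlinarith
  have hy0 : y ≠ 0 := norm_pos_iff.1 (hr.trans_le hy)
  have hmem : y⁻¹ ∈ closure (Metric.ball (0 : ℂ) r⁻¹) := by
    rw [closure_ball _ (inv_ne_zero hr.ne'), mem_closedBall_zero_iff, norm_inv]
    exact inv_anti₀ hr hy
  have := Complex.norm_le_of_forall_mem_frontier_norm_le Metric.isBounded_ball hdiff hfront hmem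
  rwa [hf y hy0, div_le_iff₀ (norm_pos_iff.2 (hB y hy))] at this

theorem Polynomial.eval_derivative_ne_zero_of_forall_mem_roots_norm_lt {Q : ℂ[X]}
    (hQ : 0 < Q.degree) {κ : ℝ} (hroots : ∀ w ∈ Q.roots, ‖w‖ < κ) {y : ℂ} (hy : κ ≤ ‖y‖) :
    Q.derivative.eval y ≠ 0 := by
  intro hy0
  have hQ0 : Q ≠ 0 := ne_zero_of_degree_gt hQ
  have hQ'0 : Q.derivative ≠ 0 := fun h =>
    (natDegree_pos_iff_degree_pos.2 hQ).ne' (derivative_eq_zero.1 h)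
  have hhull : convexHull ℝ (Q.rootSet ℂ) ⊆ Metric.ball 0 κ := by
    refine convexHull_min (fun w hw => ?_) (convex_ball 0 κ)
    rw [mem_rootSet, coe_aeval_eq_eval] at hw
    exact mem_ball_zero_iff.2 (hroots w (mem_roots'.2 ⟨hQ0, hw.2⟩))
  have hmem := hhull (rootSet_derivative_subset_convexHull_rootSet hQ
    (mem_rootSet.2 ⟨hQ'0, by rwa [coe_aeval_eq_eval]⟩))
  exact (mem_ball_zero_iff.1 hmem).not_ge hy

theorem Polynomial.norm_sub_mul_pow_le_of_forall_mem_roots_norm_lt {Q : ℂ[X]} {n μ : ℕ}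
    (hμ1 : 1 ≤ μ) (hμn : μ ≤ n) (hdeg : Q.natDegree = n)
    (hgap : ∀ j, 1 ≤ j → j < μ → Q.coeff (n - j) = 0) {κ : ℝ} (hκ : 0 < κ)
    (hroots : ∀ w ∈ Q.roots, ‖w‖ < κ) {z : ℂ} (hz : κ ≤ ‖z‖) :
    ‖(n : ℂ) * Q.eval z - z * Q.derivative.eval z‖ * ‖z‖ ^ (μ - 1)
      ≤ κ ^ μ * ‖Q.derivative.eval z‖ := by
  have hQ : 0 < Q.degree := natDegree_pos_iff_degree_pos.1 (by omega)
  have key := norm_eval_mul_pow_le_of_forall_norm_eq (a := n - μ) hκ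
    (natDegree_C_mul_sub_X_mul_derivative_le hdeg hgap)
    (by rw [natDegree_derivative, hdeg]; omega)
    (fun y hy => eval_derivative_ne_zero_of_forall_mem_roots_norm_lt hQ hroots hy)
    (fun y hy => by
      simpa [hdeg, hy] using
        Q.norm_natDegree_mul_eval_sub_le fun w hw => (hroots w hw).le.trans hy.ge) hz
  rw [natDegree_derivative, hdeg, show n - 1 - (n - μ) = μ - 1 by omega] at key
  rw [show κ ^ μ = κ * κ ^ (μ - 1) by rw [← pow_succ']; congr; omega]
  simpa using key

theorem Polynomial.norm_sub_le_pow_mul_of_forall_mem_roots_norm_le {Q : ℂ[X]} {n μ : ℕ}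
    (hμ1 : 1 ≤ μ) (hμn : μ ≤ n) (hdeg : Q.natDegree = n)
    (hgap : ∀ j, 1 ≤ j → j < μ → Q.coeff (n - j) = 0) {k : ℝ} (hk0 : 0 ≤ k) (hk1 : k ≤ 1)
    (hroots : ∀ w ∈ Q.roots, ‖w‖ ≤ k) {z : ℂ} (hz : ‖z‖ = 1) :
    ‖(n : ℂ) * Q.eval z - z * Q.derivative.eval z‖ ≤ k ^ μ * ‖Q.derivative.eval z‖ := by
  rcases hk1.lt_or_eq with hk_lt | rfl
  · have hlim : Filter.Tendsto (fun κ : ℝ => κ ^ μ * ‖Q.derivative.eval z‖)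
        (nhdsWithin k (Set.Ioi k)) (nhds (k ^ μ * ‖Q.derivative.eval z‖)) :=
      ((continuous_pow μ).mul continuous_const).continuousWithinAt
    refine ge_of_tendsto hlim ?_
    filter_upwards [Ioo_mem_nhdsGT hk_lt] with κ hκ
    have := norm_sub_mul_pow_le_of_forall_mem_roots_norm_lt hμ1 hμn hdeg hgap
      (hk0.trans_lt hκ.1) (fun w hw => (hroots w hw).trans_lt hκ.1) (hz.ge.trans' hκ.2.le)
    rwa [hz, one_pow, mul_one] at this
  · have := Q.norm_natDegree_mul_eval_sub_le fun w hw => hz.ge.trans' (hroots w hw)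
    rw [one_pow, one_mul]
    rwa [hdeg, norm_mul, hz, one_mul] at this

/-- If `P(z) = aₙzⁿ + Σ_{j=μ}^n a_{n-j} z^{n-j}`, `1 ≤ μ ≤ n`, has all its zeros in
`|z| ≤ k ≤ 1`, then for all `z` with `|z| = 1`, `|P'(z)| ≥ (n/(1 + k^μ)) |P(z)|`. -/
theorem derivative_lower_bound
    (n μ : ℕ) (P : Polynomial ℂ) (k : ℝ)
    (hμ1 : 1 ≤ μ) (hμn : μ ≤ n)
    (hdeg : P.natDegree = n)
    (hcoeff : ∀ j, 1 ≤ j → j < μ → P.coeff (n - j) = 0)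
    (hk : k ≤ 1)
    (hzeros : ∀ z : ℂ, P.eval z = 0 → ‖z‖ ≤ k) :
    ∀ z : ℂ, ‖z‖ = 1 →
      ‖(Polynomial.derivative P).eval z‖
        ≥ (n : ℝ) / (1 + k ^ μ) * ‖P.eval z‖ := by
  intro z hz
  have hP : 0 < P.degree := natDegree_pos_iff_degree_pos.1 (by omega)
  have hk0 : 0 ≤ k := by
    obtain ⟨w, hw⟩ := Complex.exists_root hP
    exact (norm_nonneg w).trans (hzeros w hw)
  have hbound := norm_sub_le_pow_mul_of_forall_mem_roots_norm_le hμ1 hμn hdeg hcoeff hk0 hk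
    (fun w hw => hzeros w (isRoot_of_mem_roots hw)) hz
  have htri : (n : ℝ) * ‖P.eval z‖ ≤ (1 + k ^ μ) * ‖(derivative P).eval z‖ :=
    calc (n : ℝ) * ‖P.eval z‖ = ‖(n : ℂ) * P.eval z‖ := by simp
      _ ≤ ‖(n : ℂ) * P.eval z - z * (derivative P).eval z‖ + ‖z * (derivative P).eval z‖ :=
        norm_le_norm_sub_add _ _
      _ ≤ (1 + k ^ μ) * ‖(derivative P).eval z‖ := by rw [norm_mul, hz]; linarith
  rw [ge_iff_le, div_mul_eq_mul_div, div_le_iff₀ (by positivity)]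
  linarith
end

section
/- Let P(z) be a polynomial of degree n having all its zeros in |z| < k, where k ≤ 1, and set m = min_{|z|=k} |P(z)|. Then for every z with |z| ≥ k, |P′(z)| ≥ m n |z|^{n−1} / k^n. -/
/-!
Suppose `‖P'(z)‖ < m n ‖z‖ⁿ⁻¹ / kⁿ` at some `‖z‖ ≥ k` and write `P'(z) = b · n zⁿ⁻¹`, so that
`‖b‖ < m / kⁿ`. The maximum modulus principle for `1 / P.reverse` on the disc of radius `1 / k`
(the exterior of the disc of radius `k`, seen from `∞`) gives `‖P(w)‖ ≥ m ‖w‖ⁿ / kⁿ` for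
`‖w‖ ≥ k`, and `‖lc P‖ ≥ m / kⁿ` at `∞`. Hence `P - b Xⁿ` is nonconstant with all its zeros in
`‖w‖ < k`, and by Gauss–Lucas so are the zeros of its derivative; but `z` is one of them.
-/

open Polynomial Metric

namespace Polynomial

theorem eval_reverse_of_ne_zero {K : Type*} [Field K] (P : K[X]) {v : K} (hv : v ≠ 0) :
    P.reverse.eval v = v ^ P.natDegree * P.eval v⁻¹ := by
  let _ : Invertible v⁻¹ := invertibleOfNonzero (inv_ne_zero hv)
  have h := eval₂_reverse_mul_pow (RingHom.id K) v⁻¹ P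
  rw [invOf_eq_inv, inv_inv, ← eval, ← eval] at h
  rw [← h, inv_pow, mul_comm, inv_mul_cancel_right₀ (pow_ne_zero _ hv)]

theorem mem_of_isRoot_derivative {P : ℂ[X]} {s : Set ℂ} (hs : Convex ℝ s)
    (hroots : ∀ z, P.IsRoot z → z ∈ s) (hP : 0 < P.degree) {z : ℂ}
    (hz : P.derivative.IsRoot z) : z ∈ s := by
  refine convexHull_min (fun w hw => hroots w (mem_rootSet.1 hw).2) hs
    (rootSet_derivative_subset_convexHull_rootSet hP (mem_rootSet.2 ⟨?_, hz⟩))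
  exact derivative_ne_zero.2 (natDegree_pos_iff_degree_pos.2 hP).ne'

section RootsInBall

variable {P : ℂ[X]} {k m : ℝ}

theorem ne_zero_of_isRoot_norm_lt (hk : 0 < k) (hroots : ∀ z, P.IsRoot z → ‖z‖ < k) :
    P ≠ 0 := by
  rintro rfl
  simpa [abs_of_pos hk] using hroots (k : ℂ) (by simp)

theorem eval_reverse_ne_zero (hk : 0 < k) (hroots : ∀ z, P.IsRoot z → ‖z‖ < k) {v : ℂ}
    (hv : ‖v‖ ≤ k⁻¹) : P.reverse.eval v ≠ 0 := by
  rcases eq_or_ne v 0 with rfl | hv0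
  · rw [← coeff_zero_eq_eval_zero, coeff_zero_reverse]
    exact leadingCoeff_ne_zero.2 (ne_zero_of_isRoot_norm_lt hk hroots)
  · rw [eval_reverse_of_ne_zero P hv0]
    refine mul_ne_zero (pow_ne_zero _ hv0) fun hroot => (hroots _ hroot).not_ge ?_
    rw [norm_inv]
    exact (le_inv_comm₀ hk (norm_pos_iff.2 hv0)).2 hv

theorem div_pow_natDegree_le_norm_eval_reverse (hk : 0 < k)
    (hroots : ∀ z, P.IsRoot z → ‖z‖ < k) (hmin : ∀ ζ ∈ sphere (0 : ℂ) k, m ≤ ‖P.eval ζ‖)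
    {v : ℂ} (hv : ‖v‖ ≤ k⁻¹) : m / k ^ P.natDegree ≤ ‖P.reverse.eval v‖ := by
  rcases le_or_gt m 0 with hm | hm
  · exact (div_nonpos_of_nonpos_of_nonneg hm (by positivity)).trans (norm_nonneg _)
  have hk' : k⁻¹ ≠ 0 := (inv_pos.2 hk).ne'
  have hdiff : DiffContOnCl ℂ (fun v => (P.reverse.eval v)⁻¹) (ball 0 k⁻¹) := by
    refine DifferentiableOn.diffContOnCl ?_
    rw [closure_ball 0 hk']
    exact P.reverse.differentiable.differentiableOn.inv fun v hv =>
      eval_reverse_ne_zero hk hroots (mem_closedBall_zero_iff.1 hv)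
  have hfrontier : ∀ v ∈ frontier (ball (0 : ℂ) k⁻¹),
      ‖(P.reverse.eval v)⁻¹‖ ≤ (m / k ^ P.natDegree)⁻¹ := by
    intro v hv
    rw [frontier_ball 0 hk', mem_sphere_zero_iff_norm] at hv
    have hv0 : v ≠ 0 := norm_ne_zero_iff.1 (hv ▸ hk')
    rw [norm_inv]
    refine inv_anti₀ (by positivity) ?_
    rw [eval_reverse_of_ne_zero P hv0, norm_mul, norm_pow, hv, inv_pow, ← div_eq_inv_mul]
    gcongr
    exact hmin _ (by simp [hv])
  have hmax := Complex.norm_le_of_forall_mem_frontier_norm_le isBounded_ball hdiff hfrontier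
    (by rw [closure_ball 0 hk']; simpa using hv)
  rw [norm_inv] at hmax
  exact (inv_le_inv₀ (norm_pos_iff.2 (eval_reverse_ne_zero hk hroots hv))
    (by positivity)).1 hmax

theorem div_pow_natDegree_le_norm_leadingCoeff (hk : 0 < k)
    (hroots : ∀ z, P.IsRoot z → ‖z‖ < k) (hmin : ∀ ζ ∈ sphere (0 : ℂ) k, m ≤ ‖P.eval ζ‖) :
    m / k ^ P.natDegree ≤ ‖P.leadingCoeff‖ := by
  have h := div_pow_natDegree_le_norm_eval_reverse hk hroots hmin (v := 0)
    (by simpa using (inv_pos.2 hk).le)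
  rwa [← coeff_zero_eq_eval_zero, coeff_zero_reverse] at h

theorem mul_pow_natDegree_div_le_norm_eval (hk : 0 < k)
    (hroots : ∀ z, P.IsRoot z → ‖z‖ < k) (hmin : ∀ ζ ∈ sphere (0 : ℂ) k, m ≤ ‖P.eval ζ‖)
    {z : ℂ} (hz : k ≤ ‖z‖) : m * ‖z‖ ^ P.natDegree / k ^ P.natDegree ≤ ‖P.eval z‖ := by
  have hz0 : 0 < ‖z‖ := hk.trans_le hz
  have h := div_pow_natDegree_le_norm_eval_reverse hk hroots hmin (v := z⁻¹)
    (by rw [norm_inv]; exact inv_anti₀ hk hz)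
  rw [eval_reverse_of_ne_zero P (inv_ne_zero (norm_pos_iff.1 hz0)), inv_inv, norm_mul, norm_pow,
    norm_inv, inv_pow, ← div_eq_inv_mul, le_div_iff₀ (by positivity)] at h
  rwa [mul_div_right_comm]

theorem eval_derivative_ne_of_norm_lt_div_pow (hk : 0 < k)
    (hroots : ∀ z, P.IsRoot z → ‖z‖ < k) (hmin : ∀ ζ ∈ sphere (0 : ℂ) k, m ≤ ‖P.eval ζ‖)
    (hn : 0 < P.natDegree) {b : ℂ} (hb : ‖b‖ < m / k ^ P.natDegree) {z : ℂ} (hz : k ≤ ‖z‖) :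
    P.derivative.eval z ≠ b * (P.natDegree * z ^ (P.natDegree - 1)) := by
  set n := P.natDegree
  set F := P - C b * X ^ n
  have hF_roots : ∀ w, F.IsRoot w → ‖w‖ < k := by
    intro w hw
    by_contra! hkw
    have hPw : P.eval w = b * w ^ n := by simpa [F, sub_eq_zero] using hw
    have h := mul_pow_natDegree_div_le_norm_eval hk hroots hmin hkw
    rw [hPw, norm_mul, norm_pow, mul_div_right_comm] at h
    exact h.not_gt (mul_lt_mul_of_pos_right hb (pow_pos (hk.trans_le hkw) _))
  have hF_deg : 0 < F.degree := by
    have hcoeff : F.coeff n ≠ 0 := by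
      rw [coeff_sub, coeff_C_mul_X_pow, if_pos rfl, sub_ne_zero]
      rintro hlc
      rw [← hlc] at hb
      exact (div_pow_natDegree_le_norm_leadingCoeff hk hroots hmin).not_gt hb
    exact (WithBot.coe_pos.2 hn).trans_le (le_degree_of_ne_zero hcoeff)
  intro h
  have hzF := mem_of_isRoot_derivative (convex_ball (0 : ℂ) k)
    (fun w hw => mem_ball_zero_iff.2 (hF_roots w hw)) hF_deg (z := z)
    (by simp [F, h, derivative_X_pow])
  exact (mem_ball_zero_iff.1 hzF).not_ge hz

end RootsInBall

end Polynomial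

theorem derivative_outside_bound_general
    (n : ℕ) (P : Polynomial ℂ) (k : ℝ)
    (hdeg : P.natDegree = n)
    (hzeros : ∀ z : ℂ, P.eval z = 0 → ‖z‖ < k)
    (m : ℝ)
    (hm : m = sInf ((fun z => ‖P.eval z‖) '' sphere (0 : ℂ) k)) :
    ∀ z : ℂ, k ≤ ‖z‖ →
      ‖(Polynomial.derivative P).eval z‖
        ≥ m * (n : ℝ) * ‖z‖ ^ (n - 1) / k ^ n := by
  intro z hz
  subst hdeg
  rcases Nat.eq_zero_or_pos P.natDegree with hn | hn
  · simp [hn]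
  obtain ⟨r, hr⟩ := Complex.exists_root (natDegree_pos_iff_degree_pos.1 hn)
  have hk : 0 < k := (norm_nonneg r).trans_lt (hzeros r hr)
  have hmin : ∀ ζ ∈ sphere (0 : ℂ) k, m ≤ ‖P.eval ζ‖ := fun ζ hζ =>
    hm ▸ csInf_le ⟨0, by rintro _ ⟨w, -, rfl⟩; exact norm_nonneg _⟩ (Set.mem_image_of_mem _ hζ)
  set D : ℂ := P.natDegree * z ^ (P.natDegree - 1)
  have hD : 0 < ‖D‖ := norm_pos_iff.2 (mul_ne_zero (Nat.cast_ne_zero.2 hn.ne')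
    (pow_ne_zero _ (norm_pos_iff.1 (hk.trans_le hz))))
  by_contra! hlt
  refine eval_derivative_ne_of_norm_lt_div_pow hk hzeros hmin hn (b := P.derivative.eval z / D) ?_
    hz (div_mul_cancel₀ _ (norm_pos_iff.1 hD)).symm
  rw [norm_div, div_lt_iff₀ hD]
  calc ‖P.derivative.eval z‖ < m * P.natDegree * ‖z‖ ^ (P.natDegree - 1) / k ^ P.natDegree := hlt
    _ = m / k ^ P.natDegree * ‖D‖ := by
      simp only [D, norm_mul, norm_pow, Complex.norm_natCast]; ring

/-- If `P` is a polynomial of degree `n` with all zeros in `|z| < k ≤ 1` and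
`m = min_{|z|=k} |P(z)|`, then for every `z` with `|z| ≥ k`,
`|P'(z)| ≥ m n |z|^{n-1} / kⁿ`. -/
theorem derivative_outside_bound
    (n : ℕ) (P : Polynomial ℂ) (k : ℝ)
    (hdeg : P.natDegree = n)
    (hk : k ≤ 1)
    (hzeros : ∀ z : ℂ, P.eval z = 0 → ‖z‖ < k)
    (m : ℝ)
    (hm : m = sInf ((fun z => ‖P.eval z‖) '' sphere (0 : ℂ) k)) :
    ∀ z : ℂ, k ≤ ‖z‖ →
      ‖(Polynomial.derivative P).eval z‖
        ≥ m * (n : ℝ) * ‖z‖ ^ (n - 1) / k ^ n :=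
  derivative_outside_bound_general n P k hdeg hzeros m hm
end

section
/- Let P(z) = a_n z^n + Σ_{ν=μ}^{n} a_{n−ν} z^{n−ν}, 1 ≤ μ ≤ n, be a polynomial of degree n having all its zeros in |z| < k, where k ≤ 1, set m = min_{|z|=k} |P(z)|, and let Q(z) = z^n · conj(P(1/conj(z))). Then for all z with |z| = 1, k^μ |P′(z)| − mn/k^{n−μ} ≥ |Q′(z)|. -/
/-!
Write `D₀P = nP - zP'`. Since `Q'` is the reversal of `conj (D₀P)`, `‖Q'(z)‖ = ‖D₀P(z)‖` on
`‖z‖ = 1`.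

If all zeros of `R` (of degree `n`) lie in `‖z‖ < k`, then on `‖z‖ = k` every root contributes a
term of real part `≥ 1/2` to `zR'(z)/R(z)`, which gives `‖D₀R(z)‖ ≤ k‖R'(z)‖`. When `D₀R` has degree
`≤ n - μ`, the maximum modulus principle for `D₀R/R'` on the exterior of the disc (where `R' ≠ 0`
by Gauss–Lucas) upgrades this to `‖D₀R(z)‖ ≤ k^μ‖R'(z)‖` on `‖z‖ = 1`.

The same principle applied to `m/P` gives `m‖z‖ⁿ ≤ kⁿ‖P(z)‖` for `‖z‖ ≥ k`, so `R = P - c zⁿ` with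
`‖c‖ < m/kⁿ` still has degree `n` and all its zeros in `‖z‖ < k`, while `D₀R = D₀P`. Choosing the
argument of `c` so that `c n zⁿ⁻¹` points along `P'(z)` and letting `‖c‖ → m/kⁿ` gives the bound.
-/

open Polynomial Metric Filter Topology

theorem Complex.half_le_re_div_sub_s12 {z r : ℂ} (hr : ‖r‖ ≤ ‖z‖) (hzr : z ≠ r) :
    1 / 2 ≤ (z / (z - r)).re := by
  have hpos : 0 < Complex.normSq (z - r) := Complex.normSq_pos.2 (sub_ne_zero.2 hzr)
  have hsq : Complex.normSq r ≤ Complex.normSq z := by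
    rw [← Complex.sq_norm, ← Complex.sq_norm]; gcongr
  rw [Complex.div_re, ← add_div, le_div_iff₀ hpos]
  simp only [Complex.normSq_apply, Complex.sub_re, Complex.sub_im] at *
  nlinarith

theorem Complex.norm_ofReal_sub_le_of_le_two_mul_re {a : ℝ} {S : ℂ} (ha : 0 ≤ a)
    (hS : a ≤ 2 * S.re) : ‖(a : ℂ) - S‖ ≤ ‖S‖ := by
  rw [← sq_le_sq₀ (norm_nonneg _) (norm_nonneg _), Complex.sq_norm, Complex.sq_norm]
  simp only [Complex.normSq_apply, Complex.sub_re, Complex.sub_im, Complex.ofReal_re,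
    Complex.ofReal_im]
  nlinarith

theorem Complex.norm_le_mul_sub_of_forall_norm_lt {p v d : ℂ} {ρ K : ℝ} (hρ : 0 < ρ)
    (hne : ∀ c : ℂ, ‖c‖ < ρ → p ≠ c * v)
    (hbd : ∀ c : ℂ, ‖c‖ < ρ → ‖d‖ ≤ K * ‖p - c * v‖) : ‖d‖ ≤ K * (‖p‖ - ρ * ‖v‖) := by
  have hp : 0 < ‖p‖ := norm_pos_iff.2 (by simpa using hne 0 (by simpa using hρ))
  have hρv : ρ * ‖v‖ ≤ ‖p‖ := by
    by_contra! hlt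
    have hv : v ≠ 0 := by rintro rfl; simp at hlt; linarith
    refine hne (p / v) ?_ (div_mul_cancel₀ p hv).symm
    rwa [norm_div, div_lt_iff₀ (norm_pos_iff.2 hv)]
  -- rotate `c * v` onto the direction of `p` and let its length `s‖v‖` grow to `ρ‖v‖`
  have hs : ∀ s ∈ Set.Ioo 0 ρ, ‖d‖ ≤ K * (‖p‖ - s * ‖v‖) := by
    rintro s ⟨hs0, hsρ⟩
    set c : ℂ := s / ‖p‖ * (‖v‖ / v) * p
    have hcv : p - c * v = ((‖p‖ - s * ‖v‖) / ‖p‖ : ℝ) * p := by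
      rcases eq_or_ne v 0 with rfl | hv
      · simp [c, hp.ne']
      · have hpC : (‖p‖ : ℂ) ≠ 0 := Complex.ofReal_ne_zero.2 hp.ne'
        simp only [c]; push_cast; field_simp
    have hc : ‖c‖ < ρ := by
      calc ‖c‖ = s * (‖v‖ / ‖v‖) := by
            simp only [c, norm_mul, norm_div, Complex.norm_real, Real.norm_eq_abs, abs_norm,
              abs_of_pos hs0]
            field_simp
        _ ≤ s := mul_le_of_le_one_right hs0.le (div_self_le_one _)
        _ < ρ := hsρ
    calc ‖d‖ ≤ K * ‖p - c * v‖ := hbd c hc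
      _ = K * (‖p‖ - s * ‖v‖) := by
        rw [hcv, norm_mul, Complex.norm_real, Real.norm_eq_abs, abs_of_nonneg (by
          apply div_nonneg _ hp.le; nlinarith [norm_nonneg v]), div_mul_cancel₀ _ hp.ne']
  have hlim : Tendsto (fun s => K * (‖p‖ - s * ‖v‖)) (𝓝[<] ρ) (𝓝 (K * (‖p‖ - ρ * ‖v‖))) :=
    ((by fun_prop : Continuous fun s : ℝ => K * (‖p‖ - s * ‖v‖)).tendsto ρ).mono_left
      nhdsWithin_le_nhds
  exact ge_of_tendsto hlim (eventually_of_mem (Ioo_mem_nhdsLT hρ) hs)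

namespace Polynomial

section CommRing

variable {R : Type*} [CommRing R]

/-- The polar derivative `nP - XP'` of `P` with respect to `0`, `P` being regarded as a
polynomial of degree `n`. -/
noncomputable def polarDerivAtZero (n : ℕ) (P : R[X]) : R[X] := C (n : R) * P - X * derivative P

theorem coeff_polarDerivAtZero (n : ℕ) (P : R[X]) (i : ℕ) :
    (polarDerivAtZero n P).coeff i = ((n : R) - i) * P.coeff i := by
  rcases i with _ | i
  · simp [polarDerivAtZero]
  · simp [polarDerivAtZero, coeff_X_mul, coeff_derivative]
    ring

theorem polarDerivAtZero_sub_C_mul_X_pow (n : ℕ) (P : R[X]) (c : R) :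
    polarDerivAtZero n (P - C c * X ^ n) = polarDerivAtZero n P := by
  ext i
  rw [coeff_polarDerivAtZero, coeff_polarDerivAtZero, coeff_sub, coeff_C_mul_X_pow]
  split_ifs with h <;> simp [h]

theorem polarDerivAtZero_map {S : Type*} [CommRing S] (f : R →+* S) (n : ℕ) (P : R[X]) :
    polarDerivAtZero n (P.map f) = (polarDerivAtZero n P).map f := by
  simp [polarDerivAtZero, Polynomial.map_sub, Polynomial.map_mul, derivative_map]

theorem natDegree_polarDerivAtZero_le {n μ : ℕ} {P : R[X]} (hP : P.natDegree ≤ n)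
    (hcoeff : ∀ j, 1 ≤ j → j < μ → P.coeff (n - j) = 0) :
    (polarDerivAtZero n P).natDegree ≤ n - μ := by
  refine natDegree_le_iff_coeff_eq_zero.mpr fun i hi => ?_
  rw [coeff_polarDerivAtZero]
  rcases lt_trichotomy i n with h | rfl | h
  · rw [show i = n - (n - i) by omega, hcoeff (n - i) (by omega) (by omega), mul_zero]
  · rw [sub_self, zero_mul]
  · rw [coeff_eq_zero_of_natDegree_lt (by omega), mul_zero]

theorem derivative_reverse (P : R[X]) :
    derivative (reverse P) = reflect (P.natDegree - 1) (polarDerivAtZero P.natDegree P) := by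
  ext i
  rw [coeff_derivative, reverse, coeff_reflect, coeff_reflect, coeff_polarDerivAtZero]
  rcases lt_or_ge i P.natDegree with h | h
  · rw [revAt_le (by omega), revAt_le (by omega),
      show P.natDegree - 1 - i = P.natDegree - (i + 1) by omega, Nat.cast_sub (by omega)]
    push_cast
    ring
  · rw [revAt_eq_self_of_lt (by omega), coeff_eq_zero_of_natDegree_lt (by omega), zero_mul]
    rcases h.eq_or_lt with rfl | hlt
    · rw [show revAt (P.natDegree - 1) P.natDegree = P.natDegree by
        rcases Nat.eq_zero_or_pos P.natDegree with h0 | h0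
        · rw [h0]; rfl
        · exact revAt_eq_self_of_lt (by omega), sub_self, zero_mul]
    · rw [revAt_eq_self_of_lt (by omega), coeff_eq_zero_of_natDegree_lt hlt, mul_zero]

end CommRing

theorem eval_reflect_eq_pow_mul_eval_inv {K : Type*} [Field K] {f : K[X]} {N : ℕ}
    (hf : f.natDegree ≤ N) {w : K} (hw : w ≠ 0) :
    (reflect N f).eval w = w ^ N * f.eval w⁻¹ := by
  let _ := invertibleOfNonzero (inv_ne_zero hw)
  have h := eval₂_reflect_mul_pow (RingHom.id K) w⁻¹ N f hf
  rw [invOf_eq_inv, inv_inv] at h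
  change (reflect N f).eval w * w⁻¹ ^ N = f.eval w⁻¹ at h
  rw [← h, inv_pow, mul_comm, mul_assoc, inv_mul_cancel₀ (pow_ne_zero N hw), mul_one]

theorem norm_eval_reflect_map_conj {f : ℂ[X]} {N : ℕ} (hf : f.natDegree ≤ N) {z : ℂ}
    (hz : ‖z‖ = 1) : ‖(reflect N (f.map (starRingEnd ℂ))).eval z‖ = ‖f.eval z‖ := by
  have hz0 : z ≠ 0 := norm_ne_zero_iff.mp (by rw [hz]; exact one_ne_zero)
  have hinv : z⁻¹ = starRingEnd ℂ z := by
    rw [Complex.inv_def, ← Complex.sq_norm, hz]; simp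
  rw [eval_reflect_eq_pow_mul_eval_inv (natDegree_map_le.trans hf) hz0, hinv, eval_map_apply,
    norm_mul, norm_pow, hz, one_pow, one_mul, Complex.norm_conj]

theorem eval_zero_reflect {R : Type*} [Semiring R] (N : ℕ) (f : R[X]) :
    (reflect N f).eval 0 = f.coeff N := by
  rw [← coeff_zero_eq_eval_zero, coeff_reflect, revAt_zero]

theorem eval_derivative_ne_zero_of_norm_root_lt {P : ℂ[X]} (hP : 0 < P.natDegree) {k : ℝ}
    (hroots : ∀ x, P.eval x = 0 → ‖x‖ < k) {z : ℂ} (hz : k ≤ ‖z‖) :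
    P.derivative.eval z ≠ 0 := by
  intro hPz
  have hroot : z ∈ P.derivative.rootSet ℂ :=
    mem_rootSet.2 ⟨derivative_ne_zero.2 hP.ne', by simpa using hPz⟩
  have hball : convexHull ℝ (P.rootSet ℂ) ⊆ ball 0 k :=
    convexHull_min (fun x hx => by simpa using hroots x (by simpa using (mem_rootSet.1 hx).2))
      (convex_ball 0 k)
  have := hball <|
    rootSet_derivative_subset_convexHull_rootSet (natDegree_pos_iff_degree_pos.mp hP) hroot
  rw [mem_ball_zero_iff] at this
  linarith

/-- Writing `P'/P = Σ 1/(z - r)` over the roots, `zP'(z)/P(z) = S` has `Re S ≥ n/2` because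
each `z/(z - r)` has real part at least `1/2`, and `D₀P(z) = P(z) (n - S)`. -/
theorem norm_eval_polarDerivAtZero_le (P : ℂ[X]) {z : ℂ} (h : ∀ r ∈ P.roots, ‖r‖ ≤ ‖z‖) :
    ‖(polarDerivAtZero P.natDegree P).eval z‖ ≤ ‖z‖ * ‖P.derivative.eval z‖ := by
  by_cases hPz : P.eval z = 0
  · simp [polarDerivAtZero, hPz]
  have hP : P ≠ 0 := by rintro rfl; simp at hPz
  set S := z * (P.roots.map fun r => 1 / (z - r)).sum with hS
  have hderiv := (IsAlgClosed.splits P).eval_derivative_eq_eval_mul_sum hPz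
  have hre : (P.natDegree : ℝ) ≤ 2 * S.re := by
    have hsum : S = (P.roots.map fun r => z / (z - r)).sum := by
      rw [hS, ← Multiset.sum_map_mul_left]; simp [div_eq_mul_inv]
    have hle := Multiset.card_nsmul_le_sum (s := P.roots.map fun r => (z / (z - r)).re)
      (a := 1 / 2) (by
        simp only [Multiset.mem_map]
        rintro _ ⟨r, hr, rfl⟩
        exact Complex.half_le_re_div_sub_s12 (h r hr) fun hzr => hPz (by
          rw [hzr]; exact (mem_roots hP).1 hr))
    rw [hsum, ← Complex.coe_reAddGroupHom, map_multiset_sum, Multiset.map_map]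
    rw [Multiset.card_map, IsAlgClosed.card_roots_eq_natDegree, nsmul_eq_mul] at hle
    simp only [Function.comp_def, Complex.coe_reAddGroupHom]
    linarith
  have hpolar : (polarDerivAtZero P.natDegree P).eval z = P.eval z * ((P.natDegree : ℝ) - S) := by
    simp only [polarDerivAtZero, eval_sub, eval_mul, eval_C, eval_X, hderiv, hS]
    push_cast; ring
  have hzderiv : z * P.derivative.eval z = P.eval z * S := by rw [hderiv, hS]; ring
  rw [← norm_mul, hzderiv, hpolar, norm_mul, norm_mul]
  gcongr
  exact Complex.norm_ofReal_sub_le_of_le_two_mul_re (Nat.cast_nonneg _) hre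

theorem norm_eval_le_mul_norm_eval_of_sphere {A B : ℂ[X]} {r C : ℝ} (hr : 0 < r)
    (hB : ∀ w ∈ closedBall (0 : ℂ) r, B.eval w ≠ 0)
    (hbd : ∀ w ∈ sphere (0 : ℂ) r, ‖A.eval w‖ ≤ C * ‖B.eval w‖) :
    ∀ w ∈ closedBall (0 : ℂ) r, ‖A.eval w‖ ≤ C * ‖B.eval w‖ := by
  intro w hw
  have hd : DiffContOnCl ℂ (fun w => A.eval w / B.eval w) (ball 0 r) := by
    refine DifferentiableOn.diffContOnCl ?_
    rw [closure_ball 0 hr.ne']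
    exact A.differentiable.differentiableOn.div B.differentiable.differentiableOn hB
  have hbd' : ∀ w ∈ frontier (ball (0 : ℂ) r), ‖A.eval w / B.eval w‖ ≤ C := by
    rw [frontier_ball 0 hr.ne']
    intro w hw
    rw [norm_div, div_le_iff₀ (norm_pos_iff.2 (hB w (sphere_subset_closedBall hw)))]
    exact hbd w hw
  have := Complex.norm_le_of_forall_mem_frontier_norm_le isBounded_ball hd hbd'
    (by rwa [closure_ball 0 hr.ne'])
  rwa [norm_div, div_le_iff₀ (norm_pos_iff.2 (hB w hw))] at this

theorem norm_eval_reflect_inv_le_iff {F G : ℂ[X]} {a b : ℕ} (hF : F.natDegree ≤ a)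
    (hG : G.natDegree ≤ b) {C : ℝ} {z : ℂ} (hz : z ≠ 0) :
    ‖(reflect a F).eval z⁻¹‖ ≤ C * ‖(reflect b G).eval z⁻¹‖ ↔
      ‖F.eval z‖ * ‖z‖ ^ b ≤ C * ‖G.eval z‖ * ‖z‖ ^ a := by
  have hz' : 0 < ‖z‖ := norm_pos_iff.2 hz
  rw [eval_reflect_eq_pow_mul_eval_inv hF (inv_ne_zero hz),
    eval_reflect_eq_pow_mul_eval_inv hG (inv_ne_zero hz), inv_inv, norm_mul, norm_mul,
    norm_pow, norm_pow, norm_inv, inv_pow, inv_pow,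
    ← mul_le_mul_iff_of_pos_right (pow_pos hz' (a + b))]
  congr! 1 <;> field_simp <;> ring

/-- Maximum modulus for the quotient `F/G` on the exterior of the disc `‖z‖ ≤ k`, including
the point at infinity. -/
theorem norm_eval_mul_pow_le_of_norm_eq {F G : ℂ[X]} {a b : ℕ} {k C : ℝ} (hk : 0 < k)
    (hF : F.natDegree ≤ a) (hG : G.natDegree = b) (hGz : ∀ z, k ≤ ‖z‖ → G.eval z ≠ 0)
    (hbd : ∀ z, ‖z‖ = k → ‖F.eval z‖ * k ^ b ≤ C * ‖G.eval z‖ * k ^ a) :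
    (∀ z, k ≤ ‖z‖ → ‖F.eval z‖ * ‖z‖ ^ b ≤ C * ‖G.eval z‖ * ‖z‖ ^ a) ∧
      ‖F.coeff a‖ ≤ C * ‖G.coeff b‖ := by
  have hG0 : G ≠ 0 := by
    rintro rfl
    exact hGz k (by simp [abs_of_pos hk]) eval_zero
  have hkinv : 0 < k⁻¹ := inv_pos.2 hk
  have hB : ∀ w ∈ closedBall (0 : ℂ) k⁻¹, (reflect b G).eval w ≠ 0 := by
    intro w hw
    rcases eq_or_ne w 0 with rfl | hw0
    · rw [eval_zero_reflect, ← hG]; exact leadingCoeff_ne_zero.2 hG0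
    · rw [eval_reflect_eq_pow_mul_eval_inv hG.le hw0]
      refine mul_ne_zero (pow_ne_zero _ hw0) (hGz _ ?_)
      rw [norm_inv, le_inv_comm₀ hk (norm_pos_iff.2 hw0)]
      simpa using hw
  have hmax := norm_eval_le_mul_norm_eval_of_sphere (A := reflect a F) hkinv hB (C := C) (by
    intro w hw
    have hw0 : w ≠ 0 := norm_pos_iff.1 ((mem_sphere_zero_iff_norm.1 hw).symm ▸ hkinv)
    rw [← inv_inv w, norm_eval_reflect_inv_le_iff hF hG.le (inv_ne_zero hw0)]
    have : ‖w⁻¹‖ = k := by rw [norm_inv, mem_sphere_zero_iff_norm.1 hw, inv_inv]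
    rw [this]
    exact hbd _ this)
  refine ⟨fun z hz => ?_, ?_⟩
  · have hz0 : z ≠ 0 := norm_pos_iff.1 (hk.trans_le hz)
    rw [← norm_eval_reflect_inv_le_iff hF hG.le hz0]
    refine hmax _ ?_
    rw [mem_closedBall_zero_iff, norm_inv]
    exact inv_anti₀ hk hz
  · simpa [eval_zero_reflect] using hmax 0 (mem_closedBall_self hkinv.le)

theorem norm_eval_derivative_reverse_map_conj (P : ℂ[X]) {z : ℂ} (hz : ‖z‖ = 1) :
    ‖(derivative (reverse (P.map (starRingEnd ℂ)))).eval z‖ =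
      ‖(polarDerivAtZero P.natDegree P).eval z‖ := by
  rw [derivative_reverse, natDegree_map, polarDerivAtZero_map]
  exact norm_eval_reflect_map_conj (natDegree_polarDerivAtZero_le le_rfl fun _ _ _ => by omega) hz

theorem natDegree_sub_C_mul_X_pow_natDegree {R : Type*} [Ring R] {P : R[X]} {c : R}
    (hc : c ≠ P.leadingCoeff) : (P - C c * X ^ P.natDegree).natDegree = P.natDegree :=
  natDegree_eq_of_le_of_coeff_ne_zero
    ((natDegree_sub_le_of_le le_rfl (natDegree_C_mul_X_pow_le _ _)).trans (max_self _).le)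
    (by rwa [coeff_sub, coeff_C_mul_X_pow, if_pos rfl, sub_ne_zero, ← leadingCoeff, ne_comm])

theorem norm_eval_polarDerivAtZero_mul_pow_le {P : ℂ[X]} {μ : ℕ} {k : ℝ} (hμ : 1 ≤ μ)
    (hμP : μ ≤ P.natDegree) (hk : 0 < k) (hroots : ∀ x, P.eval x = 0 → ‖x‖ < k)
    (hD : (polarDerivAtZero P.natDegree P).natDegree ≤ P.natDegree - μ) {z : ℂ} (hz : k ≤ ‖z‖) :
    ‖(polarDerivAtZero P.natDegree P).eval z‖ * ‖z‖ ^ (μ - 1) ≤ k ^ μ * ‖P.derivative.eval z‖ := by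
  have hP : 0 < P.natDegree := by omega
  have hpow (x : ℝ) : x ^ (P.natDegree - 1) = x ^ (P.natDegree - μ) * x ^ (μ - 1) := by
    rw [← pow_add]; congr 1; omega
  have hkμ : k ^ μ = k ^ (μ - 1) * k := by rw [← pow_succ]; congr 1; omega
  have hmax := (norm_eval_mul_pow_le_of_norm_eq hk hD (natDegree_derivative P)
    (fun z hz => eval_derivative_ne_zero_of_norm_root_lt hP hroots hz) (C := k ^ μ)
    (fun w hw => ?_)).1 z hz
  · rw [hpow] at hmax
    refine le_of_mul_le_mul_right ?_ (pow_pos (hk.trans_le hz) (P.natDegree - μ))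
    linarith
  · have hkey := norm_eval_polarDerivAtZero_le P fun r hr => by
      rw [hw]; exact (hroots r ((mem_roots (ne_zero_of_natDegree_gt hP)).1 hr)).le
    calc ‖(polarDerivAtZero P.natDegree P).eval w‖ * k ^ (P.natDegree - 1)
        ≤ k * ‖P.derivative.eval w‖ * k ^ (P.natDegree - 1) := by rw [← hw]; gcongr
      _ = k ^ μ * ‖P.derivative.eval w‖ * k ^ (P.natDegree - μ) := by rw [hpow, hkμ]; ring

theorem pos_and_le_norm_eval_of_eq_sInf {P : ℂ[X]} {k m : ℝ} (hk : 0 ≤ k)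
    (hP : ∀ x, P.eval x = 0 → ‖x‖ ≠ k)
    (hm : m = sInf ((fun z => ‖P.eval z‖) '' sphere (0 : ℂ) k)) :
    0 < m ∧ ∀ x, ‖x‖ = k → m ≤ ‖P.eval x‖ := by
  obtain ⟨⟨x, hx, hmx⟩, hmle⟩ : IsLeast ((fun z => ‖P.eval z‖) '' sphere (0 : ℂ) k) m :=
    hm ▸ ((isCompact_sphere 0 k).image (by fun_prop)).isLeast_sInf
      ((NormedSpace.sphere_nonempty.2 hk).image _)
  exact ⟨hmx ▸ norm_pos_iff.2 fun h => hP x h (mem_sphere_zero_iff_norm.1 hx),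
    fun x hx => hmle ⟨x, mem_sphere_zero_iff_norm.2 hx, rfl⟩⟩

theorem le_pow_mul_norm_eval_of_norm_eq {P : ℂ[X]} {k m : ℝ} (hk : 0 < k) (hm : 0 ≤ m)
    (hroots : ∀ x, P.eval x = 0 → ‖x‖ < k) (hmin : ∀ x, ‖x‖ = k → m ≤ ‖P.eval x‖) :
    (∀ z, k ≤ ‖z‖ → m * ‖z‖ ^ P.natDegree ≤ k ^ P.natDegree * ‖P.eval z‖) ∧
      m ≤ k ^ P.natDegree * ‖P.leadingCoeff‖ := by
  have hnorm : ‖(m : ℂ)‖ = m := by simp [abs_of_nonneg hm]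
  obtain ⟨hext, hlead⟩ := norm_eval_mul_pow_le_of_norm_eq (F := C (m : ℂ)) (a := 0) hk
    (natDegree_C _).le rfl (fun z hz h => (hroots z h).not_ge hz) (C := k ^ P.natDegree)
    (fun z hz => by rw [eval_C, hnorm, pow_zero, mul_one, mul_comm]; gcongr; exact hmin z hz)
  exact ⟨fun z hz => by simpa [abs_of_nonneg hm] using hext z hz,
    by simpa [abs_of_nonneg hm] using hlead⟩

theorem sub_C_mul_X_pow_natDegree_eq_and_norm_root_lt {P : ℂ[X]} {k m : ℝ} {c : ℂ}
    (hk : 0 < k) (hm : 0 ≤ m) (hroots : ∀ x, P.eval x = 0 → ‖x‖ < k)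
    (hmin : ∀ x, ‖x‖ = k → m ≤ ‖P.eval x‖) (hc : ‖c‖ < m / k ^ P.natDegree) :
    (P - C c * X ^ P.natDegree).natDegree = P.natDegree ∧
      ∀ x, (P - C c * X ^ P.natDegree).eval x = 0 → ‖x‖ < k := by
  obtain ⟨hgrowth, hlead⟩ := le_pow_mul_norm_eval_of_norm_eq hk hm hroots hmin
  rw [lt_div_iff₀ (pow_pos hk _)] at hc
  refine ⟨natDegree_sub_C_mul_X_pow_natDegree fun h => ?_, fun x hx => ?_⟩
  · rw [← h, mul_comm] at hlead
    linarith
  · by_contra! hxk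
    have hpos : 0 < ‖x‖ ^ P.natDegree := pow_pos (hk.trans_le hxk) _
    have := hgrowth x hxk
    rw [eval_sub, sub_eq_zero] at hx
    rw [hx, eval_mul, eval_C, eval_pow, eval_X, norm_mul, norm_pow] at this
    nlinarith

end Polynomial

/-- If `P(z) = aₙzⁿ + Σ_{ν=μ}^n a_{n-ν} z^{n-ν}`, `1 ≤ μ ≤ n`, has all its zeros in
`|z| < k ≤ 1`, `m = min_{|z|=k} |P(z)|` and `Q(z) = zⁿ · conj(P(1/conj z))`, then for
all `z` with `|z| = 1`, `k^μ |P'(z)| - mn/k^{n-μ} ≥ |Q'(z)|`. -/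
theorem reciprocal_derivative_refined_bound
    (n μ : ℕ) (P : Polynomial ℂ) (k : ℝ)
    (hμ1 : 1 ≤ μ) (hμn : μ ≤ n)
    (hdeg : P.natDegree = n)
    (hcoeff : ∀ j, 1 ≤ j → j < μ → P.coeff (n - j) = 0)
    (hk : k ≤ 1)
    (hzeros : ∀ z : ℂ, P.eval z = 0 → ‖z‖ < k)
    (m : ℝ)
    (hm : m = sInf ((fun z => ‖P.eval z‖) '' sphere (0 : ℂ) k))
    (Q : Polynomial ℂ) (hQ : Q = Polynomial.reverse (P.map (starRingEnd ℂ))) :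
    ∀ z : ℂ, ‖z‖ = 1 →
      k ^ μ * ‖(Polynomial.derivative P).eval z‖
          - m * (n : ℝ) / k ^ (n - μ)
        ≥ ‖(Polynomial.derivative Q).eval z‖ := by
  intro z hz
  subst hdeg hQ
  have hn : 0 < P.natDegree := by omega
  obtain ⟨x₀, hx₀⟩ := IsAlgClosed.exists_root P (natDegree_pos_iff_degree_pos.mp hn).ne'
  have hk0 : 0 < k := (norm_nonneg x₀).trans_lt (hzeros x₀ hx₀)
  obtain ⟨hm0, hmin⟩ :=
    pos_and_le_norm_eval_of_eq_sInf hk0.le (fun x hx => (hzeros x hx).ne) hm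
  have hderiv (c : ℂ) : (derivative (P - C c * X ^ P.natDegree)).eval z =
      (derivative P).eval z - c * (P.natDegree * z ^ (P.natDegree - 1)) := by
    simp [derivative_X_pow]
  have hD := natDegree_polarDerivAtZero_le le_rfl hcoeff
  rw [ge_iff_le, norm_eval_derivative_reverse_map_conj P hz]
  calc ‖(polarDerivAtZero P.natDegree P).eval z‖
      ≤ k ^ μ * (‖(derivative P).eval z‖
          - m / k ^ P.natDegree * ‖(P.natDegree : ℂ) * z ^ (P.natDegree - 1)‖) := by
        refine Complex.norm_le_mul_sub_of_forall_norm_lt (by positivity) (fun c hc => ?_)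
          (fun c hc => ?_) <;>
        obtain ⟨hRdeg, hRroots⟩ :=
          sub_C_mul_X_pow_natDegree_eq_and_norm_root_lt hk0 hm0.le hzeros hmin hc
        · have := eval_derivative_ne_zero_of_norm_root_lt (by omega) hRroots (hz ▸ hk)
          rwa [hderiv, sub_ne_zero] at this
        · have := norm_eval_polarDerivAtZero_mul_pow_le hμ1 (by omega) hk0 hRroots
            (by rwa [hRdeg, polarDerivAtZero_sub_C_mul_X_pow]) (hz ▸ hk)
          rwa [hRdeg, polarDerivAtZero_sub_C_mul_X_pow, hz, one_pow, mul_one, hderiv] at this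
    _ = k ^ μ * ‖(derivative P).eval z‖ - m * P.natDegree / k ^ (P.natDegree - μ) := by
        rw [norm_mul, norm_pow, hz, one_pow, mul_one, Complex.norm_natCast,
          show k ^ P.natDegree = k ^ μ * k ^ (P.natDegree - μ) by rw [← pow_add]; congr 1; omega]
        field_simp
end
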